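/- Let n ≥ 1, 1 < p < ∞, p′ = p/(p−1), and let a : (0,∞) → [0,∞) be almost increasing such that a(t)/t^λ is almost decreasing for some 0 < λ < n/p and ∫₀^1 a(t)/t dt < ∞. Set A(r) = ∫₀^r a(t)/t dt and I_a f(x) = ∫_{ℝⁿ} a(|x−y|) · |x−y|^{−n} · f(y) dy. Then there exists a constant C > 0 such that for every measurable f : ℝⁿ → [0,∞) with ‖f‖_{L^p(ℝⁿ)} ≤ 1 and every x ∈ ℝⁿ with 0 < Mf(x) < ∞, I_a f(x) ≤ C · ∫₀^{(Mf(x))^p} A(t^{−1/n}) · t^{−1/p′} dt, where Mf(x) = sup_{ρ>0} (1/|B(x,ρ)|) ∫_{B(x,ρ)} f(y) dy is the Hardy–Littlewood maximal function. -/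

import Mathlib

/-!
Hedberg's argument. Almost-decrease of `a(t)/t^λ` says that `a` has upper type `λ`:
`a(s) ≤ C (s/r)^λ a(r)` for `r ≤ s`. Hence `a` is comparable on dyadic annuli and
`a(r) ≲ ∫_{r/2}^r a(t)/t dt`. Split `ℝⁿ ∖ {x}` into the annuli `r < |x - y| ≤ 2r` with
`r = δ 2^{-j-1}` and `r = δ 2^j`, where `δ = Mf(x)^{-p/n}`. On an inner annulus the maximal
function bounds the potential by `Mf(x) a(r)`, and these terms sum to `≲ Mf(x) A(δ)`. On an outer
annulus Hölder's inequality with `‖f‖_p ≤ 1` gives `≲ a(r) r^{-n/p} ≲ Mf(x) a(δ) 2^{j(λ - n/p)}`,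
a geometric series because `λ < n/p`, and `a(δ) ≲ A(δ)`. Finally `t ↦ A(t^{-1/n}) t^{-1/p'}` is
decreasing, so its integral over `(0, Mf(x)^p)` is at least
`Mf(x)^p A(δ) Mf(x)^{-p/p'} = Mf(x) A(δ)`.
-/

open MeasureTheory Set
open scoped ENNReal

/-- The (centered) Hardy–Littlewood maximal function of a non-negative function on `ℝⁿ`. -/
noncomputable def maximalFn (n : ℕ) (f : EuclideanSpace ℝ (Fin n) → ℝ≥0∞)
    (x : EuclideanSpace ℝ (Fin n)) : ℝ≥0∞ :=
  ⨆ (ρ : ℝ) (_ : 0 < ρ), (volume (Metric.ball x ρ))⁻¹ * ∫⁻ y in Metric.ball x ρ, f y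

open Metric

def IsUpperType (a : ℝ → ℝ) (lam C : ℝ) : Prop :=
  ∀ r s, 0 < r → r ≤ s → a s ≤ C * (s / r) ^ lam * a r

lemma exists_isUpperType_of_almostDecreasing {a : ℝ → ℝ} {lam : ℝ}
    (ha : ∀ t, 0 < t → 0 ≤ a t)
    (hdec : ∃ C > (0 : ℝ), ∀ t₁ t₂ : ℝ, 0 < t₁ → t₁ < t₂ →
      a t₂ / t₂ ^ lam ≤ C * (a t₁ / t₁ ^ lam)) :
    ∃ C > (0 : ℝ), IsUpperType a lam C := by
  obtain ⟨C, hC, hdec⟩ := hdec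
  refine ⟨max C 1, by positivity, fun r s hr hrs => ?_⟩
  rcases hrs.eq_or_lt with rfl | hrs
  · rw [div_self hr.ne', Real.one_rpow, mul_one]
    exact le_mul_of_one_le_left (ha r hr) (le_max_right _ _)
  have hs := hr.trans hrs
  have key := hdec r s hr hrs
  rw [div_le_iff₀ (by positivity), mul_div_assoc', div_mul_eq_mul_div, mul_div_assoc,
    ← Real.div_rpow hs.le hr.le, mul_right_comm] at key
  calc a s ≤ C * (s / r) ^ lam * a r := key
    _ ≤ max C 1 * (s / r) ^ lam * a r := by gcongr; exacts [ha r hr, le_max_left _ _]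

section Growth

variable {a : ℝ → ℝ} {lam C : ℝ}

lemma IsUpperType.le_mul_two_rpow_mul (hup : IsUpperType a lam C) (ha : ∀ t, 0 < t → 0 ≤ a t)
    (hC : 0 < C) (hlam : 0 ≤ lam)
    {r s : ℝ} (hr : 0 < r) (hrs : r ≤ s) (hs : s ≤ 2 * r) :
    a s ≤ C * 2 ^ lam * a r := by
  have hsr : (s / r) ^ lam ≤ 2 ^ lam :=
    Real.rpow_le_rpow (div_nonneg (hr.le.trans hrs) hr.le) ((div_le_iff₀ hr).2 hs) hlam
  refine (hup r s hr hrs).trans ?_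
  gcongr
  exact ha r hr

lemma IsUpperType.apply_mul_two_pow_le (hup : IsUpperType a lam C)
    {δ : ℝ} (hδ : 0 < δ) (j : ℕ) :
    a (δ * 2 ^ j) ≤ C * (2 ^ lam) ^ j * a δ := by
  have := hup δ (δ * 2 ^ j) hδ (le_mul_of_one_le_right hδ.le (one_le_pow₀ one_le_two))
  rwa [mul_div_cancel_left₀ _ hδ.ne', ← Real.rpow_pow_comm zero_le_two] at this

lemma IsUpperType.ofReal_le_mul_setLIntegral_Ioc_half (hup : IsUpperType a lam C)
    (ha : ∀ t, 0 < t → 0 ≤ a t) (hC : 0 < C) (hlam : 0 ≤ lam)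
    {r : ℝ} (hr : 0 < r) :
    ENNReal.ofReal (a r) ≤
      ENNReal.ofReal (2 * C * 2 ^ lam) * ∫⁻ t in Ioc (r / 2) r, ENNReal.ofReal (a t / t) := by
  have hpt : ∀ t ∈ Ioc (r / 2) r, ENNReal.ofReal (a r / (C * 2 ^ lam * r)) ≤
      ENNReal.ofReal (a t / t) := by
    rintro t ⟨ht, htr⟩
    have ht0 : 0 < t := by linarith
    have hrt := hup.le_mul_two_rpow_mul ha hC hlam ht0 htr (by linarith)
    refine ENNReal.ofReal_le_ofReal ?_
    calc a r / (C * 2 ^ lam * r) ≤ a t / r := by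
          rw [div_le_div_iff₀ (by positivity) hr]; nlinarith
      _ ≤ a t / t := div_le_div_of_nonneg_left (ha t ht0) ht0 htr
  calc ENNReal.ofReal (a r)
      = ENNReal.ofReal (2 * C * 2 ^ lam) *
          (ENNReal.ofReal (a r / (C * 2 ^ lam * r)) * ENNReal.ofReal (r - r / 2)) := by
        rw [← ENNReal.ofReal_mul (div_nonneg (ha r hr) (by positivity)),
          ← ENNReal.ofReal_mul (by positivity)]
        congr 1
        field_simp
        ring
    _ = ENNReal.ofReal (2 * C * 2 ^ lam) *
          ∫⁻ _ in Ioc (r / 2) r, ENNReal.ofReal (a r / (C * 2 ^ lam * r)) := by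
        rw [setLIntegral_const, Real.volume_Ioc]
    _ ≤ _ := mul_le_mul_right (setLIntegral_mono' measurableSet_Ioc hpt) _

lemma IsUpperType.tsum_ofReal_le_mul_setLIntegral_Ioc (hup : IsUpperType a lam C)
    (ha : ∀ t, 0 < t → 0 ≤ a t) (hC : 0 < C) (hlam : 0 ≤ lam)
    {δ : ℝ} (hδ : 0 < δ) :
    ∑' j : ℕ, ENNReal.ofReal (a (δ / 2 ^ (j + 1))) ≤
      ENNReal.ofReal (2 * C * 2 ^ lam) * ∫⁻ t in Ioc 0 δ, ENNReal.ofReal (a t / t) := by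
  set r : ℕ → ℝ := fun j => δ / 2 ^ j
  have hr : Antitone r := fun i j hij =>
    div_le_div_of_nonneg_left hδ.le (by positivity) (pow_le_pow_right₀ one_le_two hij)
  have hhalf : ∀ j, r (j + 1) / 2 = r (j + 2) := fun j => by simp only [r]; ring
  calc ∑' j : ℕ, ENNReal.ofReal (a (r (j + 1)))
      ≤ ∑' j : ℕ, ENNReal.ofReal (2 * C * 2 ^ lam) *
          ∫⁻ t in Ioc (r (j + 2)) (r (j + 1)), ENNReal.ofReal (a t / t) := by
        gcongr with j
        rw [← hhalf]
        exact hup.ofReal_le_mul_setLIntegral_Ioc_half ha hC hlam (by positivity)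
    _ = ENNReal.ofReal (2 * C * 2 ^ lam) *
          ∫⁻ t in ⋃ j : ℕ, Ioc (r (j + 2)) (r (j + 1)), ENNReal.ofReal (a t / t) := by
        rw [ENNReal.tsum_mul_left, lintegral_iUnion (fun _ => measurableSet_Ioc)]
        have hr' : Antitone fun j => r (j + 1) := fun i j hij => hr (by omega)
        simpa only [Order.succ_eq_add_one] using hr'.pairwise_disjoint_on_Ioc_succ
    _ ≤ _ := by
        gcongr
        refine iUnion_subset fun j => Ioc_subset_Ioc (by positivity) ?_
        exact div_le_self hδ.le (one_le_pow₀ one_le_two)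

lemma IsUpperType.tsum_ofReal_mul_rpow_le (hup : IsUpperType a lam C)
    (ha : ∀ t, 0 < t → 0 ≤ a t) (hC : 0 < C)
    {σ δ : ℝ} (hδ : 0 < δ) :
    ∑' j : ℕ, ENNReal.ofReal (a (δ * 2 ^ j) * (δ * 2 ^ j) ^ (-σ)) ≤
      ENNReal.ofReal (C * a δ * δ ^ (-σ)) * (1 - ENNReal.ofReal (2 ^ (lam - σ)))⁻¹ := by
  have hterm : ∀ j : ℕ, a (δ * 2 ^ j) * (δ * 2 ^ j) ^ (-σ) ≤
      C * a δ * δ ^ (-σ) * (2 ^ (lam - σ)) ^ j := fun j => by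
    rw [Real.mul_rpow hδ.le (by positivity), ← Real.rpow_pow_comm zero_le_two,
      Real.rpow_sub two_pos, div_eq_mul_inv, mul_pow, ← Real.rpow_neg zero_le_two]
    calc a (δ * 2 ^ j) * (δ ^ (-σ) * (2 ^ (-σ)) ^ j)
        ≤ C * (2 ^ lam) ^ j * a δ * (δ ^ (-σ) * (2 ^ (-σ)) ^ j) := by
          gcongr
          exact hup.apply_mul_two_pow_le hδ j
      _ = _ := by ring
  calc ∑' j : ℕ, ENNReal.ofReal (a (δ * 2 ^ j) * (δ * 2 ^ j) ^ (-σ))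
      ≤ ∑' j : ℕ, ENNReal.ofReal (C * a δ * δ ^ (-σ)) * ENNReal.ofReal (2 ^ (lam - σ)) ^ j := by
        gcongr with j
        rw [← ENNReal.ofReal_pow (by positivity),
          ← ENNReal.ofReal_mul (by have := ha δ hδ; positivity)]
        exact ENNReal.ofReal_le_ofReal (hterm j)
    _ = _ := by rw [ENNReal.tsum_mul_left, ENNReal.tsum_geometric]

end Growth

lemma exists_dyadic_mem_Ioc {δ t : ℝ} (hδ : 0 < δ) (ht : 0 < t) :
    (∃ j : ℕ, t ∈ Ioc (δ / 2 ^ (j + 1)) (2 * (δ / 2 ^ (j + 1)))) ∨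
      ∃ j : ℕ, t ∈ Ioc (δ * 2 ^ j) (2 * (δ * 2 ^ j)) := by
  obtain ⟨k, hk⟩ := exists_mem_Ioc_zpow (div_pos ht hδ) one_lt_two
  rw [zpow_add_one₀ two_ne_zero, mem_Ioc, lt_div_iff₀ hδ, div_le_iff₀ hδ] at hk
  rcases k with j | j
  · right
    refine ⟨j, ?_, ?_⟩ <;> simp only [Int.ofNat_eq_natCast, zpow_natCast] at hk <;> linarith
  · left
    simp only [zpow_negSucc] at hk
    refine ⟨j, ?_, ?_⟩
    · calc δ / 2 ^ (j + 1) = (2 ^ (j + 1))⁻¹ * δ := by ring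
        _ < t := hk.1
    · calc t ≤ (2 ^ (j + 1))⁻¹ * 2 * δ := hk.2
        _ = _ := by ring

lemma lintegral_le_tsum_closedBall_diff {X : Type*} [MetricSpace X] [MeasurableSpace X]
    (μ : Measure X) [NullSingletonClass μ] (x : X) (g : X → ℝ≥0∞) {δ : ℝ} (hδ : 0 < δ) :
    ∫⁻ y, g y ∂μ ≤
      ∑' j : ℕ, ∫⁻ y in closedBall x (2 * (δ / 2 ^ (j + 1))) \ closedBall x (δ / 2 ^ (j + 1)),
          g y ∂μ +
        ∑' j : ℕ, ∫⁻ y in closedBall x (2 * (δ * 2 ^ j)) \ closedBall x (δ * 2 ^ j), g y ∂μ := by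
  have hcover : {x}ᶜ ⊆ (⋃ j : ℕ, closedBall x (2 * (δ / 2 ^ (j + 1))) \
      closedBall x (δ / 2 ^ (j + 1))) ∪
        ⋃ j : ℕ, closedBall x (2 * (δ * 2 ^ j)) \ closedBall x (δ * 2 ^ j) := by
    intro y hy
    rcases exists_dyadic_mem_Ioc hδ (dist_pos.2 hy) with ⟨j, hj⟩ | ⟨j, hj⟩
    · exact Or.inl (mem_iUnion.2 ⟨j, hj.2, hj.1.not_ge⟩)
    · exact Or.inr (mem_iUnion.2 ⟨j, hj.2, hj.1.not_ge⟩)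
  calc ∫⁻ y, g y ∂μ = ∫⁻ y in {x}ᶜ, g y ∂μ := by rw [restrict_compl_singleton]
    _ ≤ _ := lintegral_mono_set hcover
    _ ≤ _ := lintegral_union_le _ _ _
    _ ≤ _ := add_le_add (lintegral_iUnion_le _ _) (lintegral_iUnion_le _ _)

lemma setLIntegral_closedBall_diff_le {X : Type*} [PseudoMetricSpace X] [MeasurableSpace X]
    [OpensMeasurableSpace X] (μ : Measure X) (x : X) (f : X → ℝ≥0∞) {a : ℝ → ℝ} {lam C β : ℝ}
    (ha : ∀ t, 0 < t → 0 ≤ a t) (hC : 0 < C) (hlam : 0 ≤ lam)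
    (hup : IsUpperType a lam C) (hβ : 0 ≤ β)
    {r : ℝ} (hr : 0 < r) :
    ∫⁻ y in closedBall x (2 * r) \ closedBall x r,
        ENNReal.ofReal (a (dist x y) * dist x y ^ (-β)) * f y ∂μ ≤
      ENNReal.ofReal (C * 2 ^ lam * a r * r ^ (-β)) * ∫⁻ y in ball x (4 * r), f y ∂μ := by
  have hkernel : ∀ y ∈ closedBall x (2 * r) \ closedBall x r,
      ENNReal.ofReal (a (dist x y) * dist x y ^ (-β)) * f y ≤
        ENNReal.ofReal (C * 2 ^ lam * a r * r ^ (-β)) * f y := by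
    rintro y ⟨hy2, hy1⟩
    rw [mem_closedBall, dist_comm] at hy2 hy1
    have hry := not_le.1 hy1
    gcongr ENNReal.ofReal ?_ * _
    exact mul_le_mul (hup.le_mul_two_rpow_mul ha hC hlam hr hry.le hy2)
      (Real.rpow_le_rpow_of_nonpos hr hry.le (neg_nonpos.2 hβ)) (by positivity)
      (by have := ha r hr; positivity)
  calc _ ≤ ∫⁻ y in closedBall x (2 * r) \ closedBall x r,
          ENNReal.ofReal (C * 2 ^ lam * a r * r ^ (-β)) * f y ∂μ :=
        setLIntegral_mono' (measurableSet_closedBall.diff measurableSet_closedBall) hkernel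
    _ = ENNReal.ofReal (C * 2 ^ lam * a r * r ^ (-β)) *
          ∫⁻ y in closedBall x (2 * r) \ closedBall x r, f y ∂μ :=
        lintegral_const_mul' _ _ ENNReal.ofReal_ne_top
    _ ≤ _ := by
        gcongr
        exact sdiff_subset.trans (closedBall_subset_ball (by linarith))

lemma setLIntegral_ball_le_maximalFn_mul {n : ℕ} (f : EuclideanSpace ℝ (Fin n) → ℝ≥0∞)
    (x : EuclideanSpace ℝ (Fin n)) {ρ : ℝ} (hρ : 0 < ρ) :
    ∫⁻ y in ball x ρ, f y ≤ maximalFn n f x * volume (ball x ρ) := by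
  have hvol : volume (ball x ρ) ≠ 0 := (measure_ball_pos _ _ hρ).ne'
  calc ∫⁻ y in ball x ρ, f y
      = ((volume (ball x ρ))⁻¹ * ∫⁻ y in ball x ρ, f y) * volume (ball x ρ) := by
        rw [mul_comm, ← mul_assoc, ENNReal.mul_inv_cancel hvol measure_ball_lt_top.ne, one_mul]
    _ ≤ maximalFn n f x * volume (ball x ρ) := by
        gcongr
        exact le_iSup₂_of_le (f := fun ρ (_ : 0 < ρ) =>
          (volume (ball x ρ))⁻¹ * ∫⁻ y in ball x ρ, f y) ρ hρ le_rfl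

lemma setLIntegral_le_measure_rpow_of_lintegral_rpow_le_one {α : Type*} [MeasurableSpace α]
    (μ : Measure α) {p p' : ℝ} (hpq : p.HolderConjugate p') {f : α → ℝ≥0∞} (hf : Measurable f)
    (hnorm : (∫⁻ y, f y ^ p ∂μ) ^ (1 / p) ≤ 1) (s : Set α) :
    ∫⁻ y in s, f y ∂μ ≤ μ s ^ (1 / p') := by
  have holder := ENNReal.lintegral_mul_le_Lp_mul_Lq (μ.restrict s) hpq hf.aemeasurable
    (aemeasurable_const (b := (1 : ℝ≥0∞)))
  simp only [Pi.mul_apply, mul_one, ENNReal.one_rpow, lintegral_one,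
    Measure.restrict_apply MeasurableSet.univ, univ_inter] at holder
  refine holder.trans (mul_le_of_le_one_left (by positivity) (le_trans ?_ hnorm))
  exact ENNReal.rpow_le_rpow (setLIntegral_le_lintegral s _) (one_div_pos.2 hpq.pos).le

section Euclidean

variable {n : ℕ} [NeZero n] {a : ℝ → ℝ} {lam C : ℝ}

lemma volume_ball_four_mul (x : EuclideanSpace ℝ (Fin n)) {r : ℝ} (hr : 0 ≤ r) :
    volume (ball x (4 * r)) =
      ENNReal.ofReal (r ^ n) *
        (ENNReal.ofReal (4 ^ n) * volume (ball (0 : EuclideanSpace ℝ (Fin n)) 1)) := by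
  rw [Measure.addHaar_ball _ _ (by positivity), finrank_euclideanSpace_fin, mul_pow,
    ENNReal.ofReal_mul (by positivity), mul_comm (ENNReal.ofReal (4 ^ n)), mul_assoc]

lemma setLIntegral_closedBall_diff_le_maximalFn (ha : ∀ t, 0 < t → 0 ≤ a t) (hC : 0 < C)
    (hlam : 0 ≤ lam) (hup : IsUpperType a lam C)
    (f : EuclideanSpace ℝ (Fin n) → ℝ≥0∞) (x : EuclideanSpace ℝ (Fin n)) {r : ℝ} (hr : 0 < r) :
    ∫⁻ y in closedBall x (2 * r) \ closedBall x r,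
        ENNReal.ofReal (a (dist x y) * dist x y ^ (-(n : ℝ))) * f y ≤
      ENNReal.ofReal (C * 2 ^ lam) * (ENNReal.ofReal (4 ^ n) *
        volume (ball (0 : EuclideanSpace ℝ (Fin n)) 1)) * maximalFn n f x *
          ENNReal.ofReal (a r) := by
  have hcancel : ENNReal.ofReal (C * 2 ^ lam * a r * r ^ (-(n : ℝ))) * ENNReal.ofReal (r ^ n) =
      ENNReal.ofReal (C * 2 ^ lam) * ENNReal.ofReal (a r) := by
    rw [← ENNReal.ofReal_mul (by have := ha r hr; positivity), ← ENNReal.ofReal_mul (by positivity),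
      mul_assoc, Real.rpow_neg hr.le, Real.rpow_natCast,
      inv_mul_cancel₀ (pow_ne_zero n hr.ne'), mul_one]
  calc _ ≤ ENNReal.ofReal (C * 2 ^ lam * a r * r ^ (-(n : ℝ))) * ∫⁻ y in ball x (4 * r), f y :=
        setLIntegral_closedBall_diff_le volume x f ha hC hlam hup (Nat.cast_nonneg n) hr
    _ ≤ ENNReal.ofReal (C * 2 ^ lam * a r * r ^ (-(n : ℝ))) *
          (maximalFn n f x * volume (ball x (4 * r))) := by
        gcongr
        exact setLIntegral_ball_le_maximalFn_mul f x (by positivity)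
    _ = ENNReal.ofReal (C * 2 ^ lam * a r * r ^ (-(n : ℝ))) * ENNReal.ofReal (r ^ n) *
          (ENNReal.ofReal (4 ^ n) * volume (ball (0 : EuclideanSpace ℝ (Fin n)) 1)) *
            maximalFn n f x := by
        rw [volume_ball_four_mul x hr.le]
        ring
    _ = _ := by
        rw [hcancel]
        ring

lemma setLIntegral_closedBall_diff_le_of_lintegral_rpow_le_one (ha : ∀ t, 0 < t → 0 ≤ a t)
    (hC : 0 < C) (hlam : 0 ≤ lam)
    (hup : IsUpperType a lam C) {p p' : ℝ}
    (hpq : p.HolderConjugate p') {f : EuclideanSpace ℝ (Fin n) → ℝ≥0∞} (hf : Measurable f)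
    (hnorm : (∫⁻ y, f y ^ p) ^ (1 / p) ≤ 1) (x : EuclideanSpace ℝ (Fin n)) {r : ℝ}
    (hr : 0 < r) :
    ∫⁻ y in closedBall x (2 * r) \ closedBall x r,
        ENNReal.ofReal (a (dist x y) * dist x y ^ (-(n : ℝ))) * f y ≤
      ENNReal.ofReal (C * 2 ^ lam) * (ENNReal.ofReal (4 ^ n) *
        volume (ball (0 : EuclideanSpace ℝ (Fin n)) 1)) ^ (1 / p') *
          ENNReal.ofReal (a r * r ^ (-(n / p))) := by
  have hq : 0 ≤ 1 / p' := (one_div_pos.2 hpq.symm.pos).le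
  have hr_pow : r ^ (-(n : ℝ)) * (r ^ n) ^ (1 / p') = r ^ (-(n / p)) := by
    rw [← Real.rpow_natCast, ← Real.rpow_mul hr.le, ← Real.rpow_add hr]
    have : p'⁻¹ = 1 - p⁻¹ := by linarith [hpq.inv_add_inv_eq_one]
    rw [one_div, this]
    congr 1
    ring
  have hcancel : ENNReal.ofReal (C * 2 ^ lam * a r * r ^ (-(n : ℝ))) *
      ENNReal.ofReal (r ^ n) ^ (1 / p') = ENNReal.ofReal (C * 2 ^ lam) *
        ENNReal.ofReal (a r * r ^ (-(n / p))) := by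
    rw [ENNReal.ofReal_rpow_of_nonneg (by positivity) hq,
      ← ENNReal.ofReal_mul (by have := ha r hr; positivity), ← ENNReal.ofReal_mul (by positivity),
      mul_assoc, mul_assoc, ← hr_pow]
  calc _ ≤ ENNReal.ofReal (C * 2 ^ lam * a r * r ^ (-(n : ℝ))) * ∫⁻ y in ball x (4 * r), f y :=
        setLIntegral_closedBall_diff_le volume x f ha hC hlam hup (Nat.cast_nonneg n) hr
    _ ≤ ENNReal.ofReal (C * 2 ^ lam * a r * r ^ (-(n : ℝ))) *
          volume (ball x (4 * r)) ^ (1 / p') := by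
        gcongr
        exact setLIntegral_le_measure_rpow_of_lintegral_rpow_le_one volume hpq hf hnorm _
    _ = ENNReal.ofReal (C * 2 ^ lam * a r * r ^ (-(n : ℝ))) *
          ENNReal.ofReal (r ^ n) ^ (1 / p') *
            (ENNReal.ofReal (4 ^ n) *
              volume (ball (0 : EuclideanSpace ℝ (Fin n)) 1)) ^ (1 / p') := by
        rw [volume_ball_four_mul x hr.le, ENNReal.mul_rpow_of_nonneg _ _ hq]
        ring
    _ = _ := by
        rw [hcancel]
        ring

lemma tsum_setLIntegral_closedBall_diff_le_maximalFn (ha : ∀ t, 0 < t → 0 ≤ a t) (hC : 0 < C)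
    (hlam : 0 ≤ lam) (hup : IsUpperType a lam C)
    (f : EuclideanSpace ℝ (Fin n) → ℝ≥0∞) (x : EuclideanSpace ℝ (Fin n)) {δ : ℝ} (hδ : 0 < δ) :
    ∑' j : ℕ, ∫⁻ y in closedBall x (2 * (δ / 2 ^ (j + 1))) \ closedBall x (δ / 2 ^ (j + 1)),
        ENNReal.ofReal (a (dist x y) * dist x y ^ (-(n : ℝ))) * f y ≤
      ENNReal.ofReal (C * 2 ^ lam) * (ENNReal.ofReal (4 ^ n) *
        volume (ball (0 : EuclideanSpace ℝ (Fin n)) 1)) * ENNReal.ofReal (2 * C * 2 ^ lam) *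
          (maximalFn n f x * ∫⁻ t in Ioc 0 δ, ENNReal.ofReal (a t / t)) :=
  calc _ ≤ ∑' j : ℕ, ENNReal.ofReal (C * 2 ^ lam) * (ENNReal.ofReal (4 ^ n) *
        volume (ball (0 : EuclideanSpace ℝ (Fin n)) 1)) * maximalFn n f x *
          ENNReal.ofReal (a (δ / 2 ^ (j + 1))) := ENNReal.tsum_le_tsum fun j =>
        setLIntegral_closedBall_diff_le_maximalFn ha hC hlam hup f x (by positivity)
    _ ≤ ENNReal.ofReal (C * 2 ^ lam) * (ENNReal.ofReal (4 ^ n) *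
        volume (ball (0 : EuclideanSpace ℝ (Fin n)) 1)) * maximalFn n f x *
          (ENNReal.ofReal (2 * C * 2 ^ lam) * ∫⁻ t in Ioc 0 δ, ENNReal.ofReal (a t / t)) := by
        rw [ENNReal.tsum_mul_left]
        gcongr
        exact hup.tsum_ofReal_le_mul_setLIntegral_Ioc ha hC hlam hδ
    _ = _ := by ring

lemma tsum_setLIntegral_closedBall_diff_le_of_lintegral_rpow_le_one (ha : ∀ t, 0 < t → 0 ≤ a t)
    (hC : 0 < C) (hlam : 0 ≤ lam) (hup : IsUpperType a lam C) {p p' : ℝ}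
    (hpq : p.HolderConjugate p') {f : EuclideanSpace ℝ (Fin n) → ℝ≥0∞} (hf : Measurable f)
    (hnorm : (∫⁻ y, f y ^ p) ^ (1 / p) ≤ 1) (x : EuclideanSpace ℝ (Fin n)) {δ : ℝ}
    (hδ : 0 < δ) :
    ∑' j : ℕ, ∫⁻ y in closedBall x (2 * (δ * 2 ^ j)) \ closedBall x (δ * 2 ^ j),
        ENNReal.ofReal (a (dist x y) * dist x y ^ (-(n : ℝ))) * f y ≤
      ENNReal.ofReal (C * 2 ^ lam) * (ENNReal.ofReal (4 ^ n) *
        volume (ball (0 : EuclideanSpace ℝ (Fin n)) 1)) ^ (1 / p') *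
          (ENNReal.ofReal C * ENNReal.ofReal (2 * C * 2 ^ lam) *
            (1 - ENNReal.ofReal (2 ^ (lam - n / p)))⁻¹) *
          (ENNReal.ofReal (δ ^ (-(n / p))) * ∫⁻ t in Ioc 0 δ, ENNReal.ofReal (a t / t)) := by
  have haδ : ENNReal.ofReal (a δ) ≤
      ENNReal.ofReal (2 * C * 2 ^ lam) * ∫⁻ t in Ioc 0 δ, ENNReal.ofReal (a t / t) :=
    (hup.ofReal_le_mul_setLIntegral_Ioc_half ha hC hlam hδ).trans <|
      mul_le_mul_right (lintegral_mono_set (Ioc_subset_Ioc (half_pos hδ).le le_rfl)) _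
  calc _ ≤ ∑' j : ℕ, ENNReal.ofReal (C * 2 ^ lam) * (ENNReal.ofReal (4 ^ n) *
        volume (ball (0 : EuclideanSpace ℝ (Fin n)) 1)) ^ (1 / p') *
          ENNReal.ofReal (a (δ * 2 ^ j) * (δ * 2 ^ j) ^ (-(n / p))) :=
        ENNReal.tsum_le_tsum fun j =>
          setLIntegral_closedBall_diff_le_of_lintegral_rpow_le_one ha hC hlam hup hpq hf hnorm x
            (by positivity)
    _ ≤ ENNReal.ofReal (C * 2 ^ lam) * (ENNReal.ofReal (4 ^ n) *
        volume (ball (0 : EuclideanSpace ℝ (Fin n)) 1)) ^ (1 / p') *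
          (ENNReal.ofReal C * ENNReal.ofReal (a δ) * ENNReal.ofReal (δ ^ (-(n / p))) *
            (1 - ENNReal.ofReal (2 ^ (lam - n / p)))⁻¹) := by
        rw [ENNReal.tsum_mul_left, ← ENNReal.ofReal_mul hC.le,
          ← ENNReal.ofReal_mul (by have := ha δ hδ; positivity)]
        gcongr
        exact hup.tsum_ofReal_mul_rpow_le ha hC hδ
    _ ≤ _ := by
        grw [haδ]
        exact le_of_eq (by ring)

lemma exists_lintegral_potential_le_mul_maximalFn (ha : ∀ t, 0 < t → 0 ≤ a t) (hC : 0 < C)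
    (hlam : 0 ≤ lam) (hup : IsUpperType a lam C)
    {p p' : ℝ} (hpq : p.HolderConjugate p') (hlamnp : lam < n / p) :
    ∃ K : ℝ≥0∞, K ≠ ⊤ ∧ ∀ f : EuclideanSpace ℝ (Fin n) → ℝ≥0∞, Measurable f →
      (∫⁻ y, f y ^ p) ^ (1 / p) ≤ 1 → ∀ x : EuclideanSpace ℝ (Fin n),
        maximalFn n f x ≠ 0 → maximalFn n f x ≠ ⊤ →
          ∫⁻ y, ENNReal.ofReal (a (dist x y) * dist x y ^ (-(n : ℝ))) * f y ≤
            K * (maximalFn n f x * ∫⁻ t in Ioc 0 ((maximalFn n f x).toReal ^ (-(p / n))),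
              ENNReal.ofReal (a t / t)) := by
  set c := volume (ball (0 : EuclideanSpace ℝ (Fin n)) 1)
  set θ := ENNReal.ofReal (2 ^ (lam - n / p))
  have hθ : θ < 1 := ENNReal.ofReal_lt_one.2 <|
    Real.rpow_lt_one_of_one_lt_of_neg one_lt_two (by linarith)
  refine ⟨ENNReal.ofReal (C * 2 ^ lam) * (ENNReal.ofReal (4 ^ n) * c) *
      ENNReal.ofReal (2 * C * 2 ^ lam) + ENNReal.ofReal (C * 2 ^ lam) *
        (ENNReal.ofReal (4 ^ n) * c) ^ (1 / p') *
          (ENNReal.ofReal C * ENNReal.ofReal (2 * C * 2 ^ lam) * (1 - θ)⁻¹), ?_, ?_⟩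
  · have hc : c ≠ ⊤ := measure_ball_lt_top.ne
    have hθ' : (1 - θ)⁻¹ ≠ ⊤ := ENNReal.inv_ne_top.2 (tsub_pos_of_lt hθ).ne'
    have hq : 0 ≤ 1 / p' := (one_div_pos.2 hpq.symm.pos).le
    finiteness
  intro f hf hnorm x hM0 hMT
  set M := (maximalFn n f x).toReal
  have hM : 0 < M := ENNReal.toReal_pos hM0 hMT
  have hδM : (M ^ (-(p / n))) ^ (-(n / p)) = M := by
    have hn : (n : ℝ) ≠ 0 := Nat.cast_ne_zero.2 (NeZero.ne n)
    rw [← Real.rpow_mul hM.le, neg_mul_neg, div_mul_div_comm, mul_comm p,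
      div_self (mul_ne_zero hn hpq.pos.ne'), Real.rpow_one]
  have hδ : 0 < M ^ (-(p / n)) := Real.rpow_pos_of_pos hM _
  calc _ ≤ _ := lintegral_le_tsum_closedBall_diff volume x _ hδ
    _ ≤ _ := add_le_add (tsum_setLIntegral_closedBall_diff_le_maximalFn ha hC hlam hup f x hδ)
        (tsum_setLIntegral_closedBall_diff_le_of_lintegral_rpow_le_one ha hC hlam hup hpq hf
          hnorm x hδ)
    _ = _ := by rw [hδM, ENNReal.ofReal_toReal hMT, add_mul]

end Euclidean

lemma ofReal_mul_le_setLIntegral_Ioo {g : ℝ → ℝ≥0∞} {T : ℝ} (hg : ∀ t ∈ Ioo 0 T, g T ≤ g t) :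
    ENNReal.ofReal T * g T ≤ ∫⁻ t in Ioo 0 T, g t := by
  calc ENNReal.ofReal T * g T = ∫⁻ _ in Ioo 0 T, g T := by
        rw [setLIntegral_const, Real.volume_Ioo, sub_zero, mul_comm]
    _ ≤ _ := setLIntegral_mono' measurableSet_Ioo hg

lemma mul_setLIntegral_Ioc_le_lintegral_Ioo {a : ℝ → ℝ} {n : ℕ} {p p' : ℝ}
    (hpq : p.HolderConjugate p') {m : ℝ≥0∞} (hm0 : m ≠ 0) (hmT : m ≠ ⊤) :
    m * ∫⁻ s in Ioc 0 (m.toReal ^ (-(p / n))), ENNReal.ofReal (a s / s) ≤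
      ∫⁻ t in Ioo 0 (m.toReal ^ p),
        (∫⁻ s in Ioc 0 (t ^ (-1 / (n : ℝ))), ENNReal.ofReal (a s / s)) *
          ENNReal.ofReal (t ^ (-1 / p')) := by
  set M := m.toReal
  have hM : 0 < M := ENNReal.toReal_pos hm0 hmT
  have hMp : 0 < M ^ p := Real.rpow_pos_of_pos hM p
  have hexp : (M ^ p) ^ (-1 / (n : ℝ)) = M ^ (-(p / n)) := by
    rw [← Real.rpow_mul hM.le]
    ring_nf
  have hMp_mul : M ^ p * (M ^ p) ^ (-1 / p') = M := by
    have : p'⁻¹ = 1 - p⁻¹ := by linarith [hpq.inv_add_inv_eq_one]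
    rw [← Real.rpow_mul hM.le, ← Real.rpow_add hM, div_eq_mul_inv, this,
      show p + p * (-1 * (1 - p⁻¹)) = 1 by field_simp [hpq.pos.ne']; ring, Real.rpow_one]
  calc m * ∫⁻ s in Ioc 0 (M ^ (-(p / n))), ENNReal.ofReal (a s / s)
      = ENNReal.ofReal (M ^ p) * ((∫⁻ s in Ioc 0 ((M ^ p) ^ (-1 / (n : ℝ))),
          ENNReal.ofReal (a s / s)) * ENNReal.ofReal ((M ^ p) ^ (-1 / p'))) := by
        rw [hexp, mul_left_comm, ← ENNReal.ofReal_mul hMp.le, hMp_mul,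
          ENNReal.ofReal_toReal hmT, mul_comm]
    _ ≤ _ := ofReal_mul_le_setLIntegral_Ioo fun t ⟨ht0, htT⟩ => by
        gcongr ?_ * ENNReal.ofReal ?_
        · exact lintegral_mono_set (Ioc_subset_Ioc le_rfl (Real.rpow_le_rpow_of_nonpos ht0 htT.le
            (div_nonpos_of_nonpos_of_nonneg (by norm_num) (Nat.cast_nonneg n))))
        · exact Real.rpow_le_rpow_of_nonpos ht0 htT.le
            (div_nonpos_of_nonpos_of_nonneg (by norm_num) hpq.symm.pos.le)

theorem potential_le_orlicz_integral_general
    (n : ℕ) (p p' : ℝ) (hp : 1 < p) (hp' : p' = p / (p - 1))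
    (a : ℝ → ℝ) (ha : ∀ t : ℝ, 0 < t → 0 ≤ a t)
    (lam : ℝ) (hlam0 : 0 < lam) (hlamnp : lam < n / p)
    (hdec : ∃ C > (0 : ℝ), ∀ t₁ t₂ : ℝ, 0 < t₁ → t₁ < t₂ →
      a t₂ / t₂ ^ lam ≤ C * (a t₁ / t₁ ^ lam)) :
    ∃ C > (0 : ℝ), ∀ f : EuclideanSpace ℝ (Fin n) → ℝ≥0∞, Measurable f →
      (∫⁻ y, f y ^ p) ^ (1 / p) ≤ 1 →
      ∀ x : EuclideanSpace ℝ (Fin n), 0 < maximalFn n f x → maximalFn n f x < ⊤ →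
        (∫⁻ y, ENNReal.ofReal (a (dist x y) * dist x y ^ (-(n : ℝ))) * f y) ≤
          ENNReal.ofReal C *
            ∫⁻ t in Ioo (0 : ℝ) ((maximalFn n f x).toReal ^ p),
              (∫⁻ s in Ioc (0 : ℝ) (t ^ (-1 / (n : ℝ))), ENNReal.ofReal (a s / s)) *
                ENNReal.ofReal (t ^ (-1 / p')) := by
  have hpq : p.HolderConjugate p' := hp' ▸ Real.HolderConjugate.conjExponent hp
  have hn : (0 : ℝ) < n := (div_pos_iff_of_pos_right hpq.pos).1 (hlam0.trans hlamnp)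
  have : NeZero n := ⟨Nat.cast_pos.1 hn |>.ne'⟩
  obtain ⟨C, hC, hup⟩ := exists_isUpperType_of_almostDecreasing ha hdec
  obtain ⟨K, hK, hpotential⟩ :=
    exists_lintegral_potential_le_mul_maximalFn ha hC hlam0.le hup hpq hlamnp
  refine ⟨K.toReal + 1, by positivity, fun f hf hnorm x hM0 hMT => ?_⟩
  calc _ ≤ _ := hpotential f hf hnorm x hM0.ne' hMT.ne
    _ ≤ K * _ := mul_le_mul_right (mul_setLIntegral_Ioc_le_lintegral_Ioo hpq hM0.ne' hMT.ne) _
    _ ≤ _ := by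
        gcongr
        exact (ENNReal.ofReal_toReal hK).symm.le.trans (ENNReal.ofReal_le_ofReal (by linarith))

/-- Pointwise Orlicz-type estimate for the generalized potential: with
`A(r) = ∫₀^r a(t)/t dt`, for `‖f‖_{L^p} ≤ 1` and `0 < Mf(x) < ∞`,
`I_a f(x) ≤ C ∫₀^{(Mf(x))^p} A(t^{-1/n}) t^{-1/p'} dt`. -/
theorem potential_le_orlicz_integral
    (n : ℕ) (hn : 1 ≤ n) (p p' : ℝ) (hp : 1 < p) (hp' : p' = p / (p - 1))
    (a : ℝ → ℝ) (ha : ∀ t : ℝ, 0 < t → 0 ≤ a t)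
    (hinc : ∃ C > (0 : ℝ), ∀ t₁ t₂ : ℝ, 0 < t₁ → t₁ < t₂ → a t₁ ≤ C * a t₂)
    (lam : ℝ) (hlam0 : 0 < lam) (hlamnp : lam < n / p)
    (hdec : ∃ C > (0 : ℝ), ∀ t₁ t₂ : ℝ, 0 < t₁ → t₁ < t₂ →
      a t₂ / t₂ ^ lam ≤ C * (a t₁ / t₁ ^ lam))
    (hfin : (∫⁻ t in Ioc (0 : ℝ) 1, ENNReal.ofReal (a t / t)) < ⊤) :
    ∃ C > (0 : ℝ), ∀ f : EuclideanSpace ℝ (Fin n) → ℝ≥0∞, Measurable f →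
      (∫⁻ y, f y ^ p) ^ (1 / p) ≤ 1 →
      ∀ x : EuclideanSpace ℝ (Fin n), 0 < maximalFn n f x → maximalFn n f x < ⊤ →
        (∫⁻ y, ENNReal.ofReal (a (dist x y) * dist x y ^ (-(n : ℝ))) * f y) ≤
          ENNReal.ofReal C *
            ∫⁻ t in Ioo (0 : ℝ) ((maximalFn n f x).toReal ^ p),
              (∫⁻ s in Ioc (0 : ℝ) (t ^ (-1 / (n : ℝ))), ENNReal.ofReal (a s / s)) *
                ENNReal.ofReal (t ^ (-1 / p')) :=
  potential_le_orlicz_integral_general n p p' hp hp' a ha lam hlam0 hlamnp hdec
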